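/- Let n ≥ 1, let f : EuclideanSpace ℝ (Fin n) → ℝ be twice continuously differentiable, and let a : ℝ → ℝ be differentiable. Assume ‖∇f(x)‖² = a(f x) for all x. Let x₀ be a point with ∇f(x₀) ≠ 0, and define the unit normal field N(x) = ‖∇f(x)‖⁻¹ • ∇f(x) on the (open) set where ∇f ≠ 0. Then the derivative of N at x₀ in the direction N(x₀) vanishes: (fderiv ℝ N x₀)(N x₀) = 0. That is, N is a geodesic vector field: the integral curves of ∇f/‖∇f‖ are straight lines (unit-speed geodesics) in Euclidean space. -/

import Mathlib

/-!
Differentiating `‖∇f‖² = a ∘ f` gives `2 ⟪∇f, H v⟫ = a'(f) ⟪∇f, v⟫` for the Hessian `H`, so by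
symmetry of `H` the gradient is an eigenvector: `H ∇f = (a'(f) / 2) ∇f`. The map
`z ↦ z / ‖z‖` is constant along rays, so its derivative at `z` kills `z`; by the chain rule the
derivative of `N = ∇f / ‖∇f‖` in the direction `N ∥ ∇f` vanishes.
-/

open Topology
open scoped RealInnerProductSpace

section Normalize

variable {V : Type*} [NormedAddCommGroup V] [NormedSpace ℝ V]

theorem fderiv_normalize_apply_self (x : V) : fderiv ℝ NormedSpace.normalize x x = 0 := by
  by_cases hd : DifferentiableAt ℝ NormedSpace.normalize x
  · have hconst : (fun t : ℝ => NormedSpace.normalize (x + t • x)) =ᶠ[𝓝 0]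
        fun _ => NormedSpace.normalize x := by
      filter_upwards [Ioi_mem_nhds (show (-1 : ℝ) < 0 by norm_num)] with t ht
      rw [show x + t • x = (1 + t) • x by module,
        NormedSpace.normalize_smul_of_pos (by linarith [Set.mem_Ioi.mp ht])]
    rw [← hd.lineDeriv_eq_fderiv, lineDeriv, hconst.deriv_eq, deriv_const]
  · rw [fderiv_zero_of_not_differentiableAt hd, zero_apply]

theorem fderiv_normalize_comp_apply_eq_zero {E : Type*} [NormedAddCommGroup E]
    [NormedSpace ℝ E] {g : E → V} {x v : E} {c : ℝ}
    (hn : DifferentiableAt ℝ NormedSpace.normalize (g x)) (hg : DifferentiableAt ℝ g x)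
    (hv : fderiv ℝ g x v = c • g x) :
    fderiv ℝ (NormedSpace.normalize ∘ g) x v = 0 := by
  rw [fderiv_comp x hn hg, ContinuousLinearMap.comp_apply, hv, map_smul,
    fderiv_normalize_apply_self, smul_zero]

end Normalize

theorem differentiableAt_normalize {F : Type*} [NormedAddCommGroup F] [InnerProductSpace ℝ F]
    {x : F} (hx : x ≠ 0) : DifferentiableAt ℝ NormedSpace.normalize x :=
  ((differentiableAt_id.norm ℝ hx).inv (norm_ne_zero_iff.mpr hx)).smul differentiableAt_id

section Gradient

variable {E : Type*} [NormedAddCommGroup E] [InnerProductSpace ℝ E] [CompleteSpace E]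
  {f : E → ℝ} {x : E}

theorem ContDiffAt.differentiableAt_gradient (hf : ContDiffAt ℝ 2 f x) :
    DifferentiableAt ℝ (gradient f) x :=
  (InnerProductSpace.toDual ℝ E).symm.differentiableAt.comp x
    ((hf.fderiv_right (m := 1) le_rfl).differentiableAt one_ne_zero)

theorem ContDiffAt.isSymmetric_fderiv_gradient (hf : ContDiffAt ℝ 2 f x) :
    (fderiv ℝ (gradient f) x : E →ₗ[ℝ] E).IsSymmetric := by
  have hinner : ∀ u v, ⟪fderiv ℝ (gradient f) x u, v⟫ = fderiv ℝ (fderiv ℝ f) x u v := by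
    intro u v
    change ⟪fderiv ℝ ((InnerProductSpace.toDual ℝ E).symm ∘ fderiv ℝ f) x u, v⟫ = _
    rw [LinearIsometryEquiv.comp_fderiv]
    exact InnerProductSpace.toDual_symm_apply
  intro u v
  show ⟪fderiv ℝ (gradient f) x u, v⟫ = ⟪u, fderiv ℝ (gradient f) x v⟫
  rw [hinner, real_inner_comm, hinner]
  exact hf.isSymmSndFDerivAt (by simp) u v

theorem ContDiffAt.fderiv_gradient_apply_gradient_of_norm_sq_eq_comp
    (hf : ContDiffAt ℝ 2 f x) {a : ℝ → ℝ} (ha : DifferentiableAt ℝ a (f x))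
    (hiso : ∀ y, ‖gradient f y‖ ^ 2 = a (f y)) :
    fderiv ℝ (gradient f) x (gradient f x) = (deriv a (f x) / 2) • gradient f x := by
  set H := fderiv ℝ (gradient f) x
  have hlhs : HasFDerivAt (fun y => ‖gradient f y‖ ^ 2) (2 • innerSL ℝ (gradient f x) ∘L H) x :=
    hf.differentiableAt_gradient.hasFDerivAt.norm_sq
  have hrhs : HasFDerivAt (fun y => a (f y)) (deriv a (f x) • fderiv ℝ f x) x :=
    ha.hasDerivAt.comp_hasFDerivAt x (hf.differentiableAt two_ne_zero).hasFDerivAt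
  have hderiv : 2 • innerSL ℝ (gradient f x) ∘L H = deriv a (f x) • fderiv ℝ f x :=
    hlhs.unique (by simpa only [hiso] using hrhs)
  refine ext_inner_right ℝ fun v => ?_
  have hv := congr($hderiv v)
  simp only [smul_apply, ContinuousLinearMap.comp_apply, innerSL_apply_apply, smul_eq_mul,
    nsmul_eq_mul, Nat.cast_ofNat, ← inner_gradient_left] at hv
  have hsym : ⟪H (gradient f x), v⟫ = ⟪gradient f x, H v⟫ := hf.isSymmetric_fderiv_gradient _ _
  rw [hsym, real_inner_smul_left]
  linarith

end Gradient

theorem normalized_gradient_geodesic_general {n : ℕ}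
    (f : EuclideanSpace ℝ (Fin n) → ℝ) (hf : ContDiff ℝ 2 f)
    (a : ℝ → ℝ) (ha : Differentiable ℝ a)
    (hiso : ∀ x, ‖gradient f x‖ ^ 2 = a (f x))
    (x₀ : EuclideanSpace ℝ (Fin n)) (hx₀ : gradient f x₀ ≠ 0)
    (N : EuclideanSpace ℝ (Fin n) → EuclideanSpace ℝ (Fin n))
    (hN : ∀ x, N x = ‖gradient f x‖⁻¹ • gradient f x) :
    fderiv ℝ N x₀ (N x₀) = 0 := by
  obtain rfl : N = NormedSpace.normalize ∘ gradient f := funext hN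
  refine fderiv_normalize_comp_apply_eq_zero (differentiableAt_normalize hx₀)
    hf.contDiffAt.differentiableAt_gradient (c := ‖gradient f x₀‖⁻¹ * (deriv a (f x₀) / 2)) ?_
  rw [Function.comp_apply, NormedSpace.normalize, map_smul,
    hf.contDiffAt.fderiv_gradient_apply_gradient_of_norm_sq_eq_comp (ha _) hiso, smul_smul]

/-- For an isoparametric-type function (`‖∇f‖² = a ∘ f`), the normalized gradient field
`N = ∇f/‖∇f‖` is a geodesic vector field: its derivative in its own direction vanishes,
so the integral curves of `N` are straight (unit-speed) lines in Euclidean space. -/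
theorem normalized_gradient_geodesic {n : ℕ} (hn : 1 ≤ n)
    (f : EuclideanSpace ℝ (Fin n) → ℝ) (hf : ContDiff ℝ 2 f)
    (a : ℝ → ℝ) (ha : Differentiable ℝ a)
    (hiso : ∀ x, ‖gradient f x‖ ^ 2 = a (f x))
    (x₀ : EuclideanSpace ℝ (Fin n)) (hx₀ : gradient f x₀ ≠ 0)
    (N : EuclideanSpace ℝ (Fin n) → EuclideanSpace ℝ (Fin n))
    (hN : ∀ x, N x = ‖gradient f x‖⁻¹ • gradient f x) :
    fderiv ℝ N x₀ (N x₀) = 0 :=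
  normalized_gradient_geodesic_general f hf a ha hiso x₀ hx₀ N hN
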